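/- arXiv:1802.08038 — 3 statements merged into one kernel-verified Lean document; each statement's English description precedes it below -/
import Mathlib

section
/- Let σ : [0,∞) → [0,∞) be a C² convex function with σ(0) = 0 whose derivative σ' is concave. Then for all r₁, r₂ > 0 one has 0 ≤ σ(r₁+r₂) − σ(r₁) − σ(r₂) ≤ 2·(r₁·σ(r₂) + r₂·σ(r₁))/(r₁+r₂). -/
/-!
Convexity of `σ` with `σ 0 = 0` makes `σ` superadditive, which is the lower bound. For the upper
bound, `σ'` is concave with `σ' 0 ≥ 0` (as `σ ≥ 0 = σ 0`), so `t ↦ σ' t / t` is nonincreasing;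
hence `σ'` is subadditive and `r σ'(r) ≤ 2 σ(r)`. Subadditivity of `σ'` makes
`t ↦ σ(a + t) - σ(t) - t σ'(a)` nonincreasing, so `σ(a + b) - σ a - σ b ≤ b σ'(a)`. Multiplying
this bound for `(a, b) = (r₁, r₂)` by `r₁`, and for `(r₂, r₁)` by `r₂`, and adding gives the claim.
-/

open Set

namespace ConvexOn

variable {f : ℝ → ℝ}

theorem mul_map_le_mul (hf : ConvexOn ℝ (Ici 0) f) (h0 : f 0 ≤ 0) {t r : ℝ} (ht : 0 ≤ t)
    (htr : t ≤ r) : r * f t ≤ t * f r := by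
  rcases (ht.trans htr).eq_or_lt with rfl | hr
  · simp [le_antisymm htr ht]
  have hweights : (r - t) / r + t / r = 1 := by field_simp; ring
  have h := hf.2 self_mem_Ici (show r ∈ Ici 0 from hr.le)
    (div_nonneg (sub_nonneg.2 htr) hr.le) (div_nonneg ht hr.le) hweights
  simp only [smul_eq_mul, mul_zero, zero_add, div_mul_cancel₀ t hr.ne'] at h
  have hterm : (r - t) / r * f 0 ≤ 0 :=
    mul_nonpos_of_nonneg_of_nonpos (div_nonneg (sub_nonneg.2 htr) hr.le) h0
  calc r * f t ≤ r * (t / r * f r) := by gcongr; linarith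
    _ = t * f r := by field_simp

theorem add_le_map_add (hf : ConvexOn ℝ (Ici 0) f) (h0 : f 0 ≤ 0) {a b : ℝ} (ha : 0 ≤ a)
    (hb : 0 ≤ b) : f a + f b ≤ f (a + b) := by
  rcases (add_nonneg ha hb).eq_or_lt with hab | hab
  · obtain ⟨rfl, rfl⟩ : a = 0 ∧ b = 0 := ⟨by linarith, by linarith⟩
    simpa using h0
  have hfa := hf.mul_map_le_mul h0 ha (le_add_of_nonneg_right hb)
  have hfb := hf.mul_map_le_mul h0 hb (le_add_of_nonneg_left ha)
  refine le_of_mul_le_mul_left ?_ hab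
  linarith

end ConvexOn

namespace ConcaveOn

variable {f : ℝ → ℝ}

theorem mul_le_mul_map (hf : ConcaveOn ℝ (Ici 0) f) (h0 : 0 ≤ f 0) {t r : ℝ} (ht : 0 ≤ t)
    (htr : t ≤ r) : t * f r ≤ r * f t := by
  have h := hf.neg.mul_map_le_mul (by simpa using h0) ht htr
  simp only [Pi.neg_apply, mul_neg, neg_le_neg_iff] at h
  exact h

theorem map_add_le_add (hf : ConcaveOn ℝ (Ici 0) f) (h0 : 0 ≤ f 0) {a b : ℝ} (ha : 0 ≤ a)
    (hb : 0 ≤ b) : f (a + b) ≤ f a + f b := by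
  have h := hf.neg.add_le_map_add (by simpa using h0) ha hb
  simp only [Pi.neg_apply] at h
  linarith

end ConcaveOn

theorem deriv_nonneg_of_isMinOn_Ici {f : ℝ → ℝ} {a : ℝ} (h : IsMinOn f (Ici a) a) :
    0 ≤ deriv f a := by
  by_cases hf : DifferentiableAt ℝ f a
  · have hcone : (1 : ℝ) ∈ posTangentConeAt (Ici a) a :=
      mem_posTangentConeAt_of_segment_subset ((convex_Ici a).segment_subset (by simp) (by simp))
    simpa using h.localize.hasFDerivWithinAt_nonneg hf.hasFDerivAt.hasFDerivWithinAt hcone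
  · rw [deriv_zero_of_not_differentiableAt hf]

section DerivBounds

variable {f f' : ℝ → ℝ}

theorem map_add_sub_sub_le_mul (hf : ContinuousOn f (Ici 0))
    (hderiv : ∀ x, 0 < x → HasDerivAt f (f' x) x)
    (hsub : ∀ x y, 0 < x → 0 < y → f' (x + y) ≤ f' x + f' y) {a b : ℝ} (ha : 0 < a)
    (hb : 0 ≤ b) : f (a + b) - f a - f b ≤ b * f' a - f 0 := by
  have hanti : AntitoneOn (fun t => f (a + t) - f t - t * f' a) (Icc 0 b) := by
    refine antitoneOn_of_hasDerivWithinAt_nonpos (f' := fun t => f' (a + t) - f' t - f' a)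
      (convex_Icc 0 b) ?_ (fun t ht => ?_) (fun t ht => ?_)
    · exact ((hf.comp (continuous_const.add continuous_id).continuousOn
        fun t ht => add_nonneg ha.le ht.1).sub (hf.mono Icc_subset_Ici_self)).sub (by fun_prop)
    · rw [interior_Icc] at ht
      have hshift : HasDerivAt (fun t => f (a + t)) (f' (a + t)) t := by
        simpa using (hderiv (a + t) (by linarith [ht.1])).comp_const_add a t
      exact ((hshift.sub (hderiv t ht.1)).sub (hasDerivAt_mul_const (f' a))).hasDerivWithinAt
    · rw [interior_Icc] at ht
      linarith [hsub a t ha ht.1]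
  have h := hanti (left_mem_Icc.2 hb) (right_mem_Icc.2 hb) hb
  simp only [add_zero, zero_mul, sub_zero] at h
  linarith

theorem mul_deriv_le_two_mul_sub {r : ℝ} (hr : 0 < r) (hf : ContinuousOn f (Icc 0 r))
    (hderiv : ∀ t ∈ Ioo 0 r, HasDerivAt f (f' t) t)
    (hchord : ∀ t ∈ Ioo 0 r, t * f' r ≤ r * f' t) :
    r * f' r ≤ 2 * (f r - f 0) := by
  have hmono : MonotoneOn (fun t => r * f t - t ^ 2 / 2 * f' r) (Icc 0 r) := by
    refine monotoneOn_of_hasDerivWithinAt_nonneg (f' := fun t => r * f' t - t * f' r)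
      (convex_Icc 0 r) ?_ (fun t ht => ?_) (fun t ht => ?_)
    · exact (continuousOn_const.mul hf).sub (by fun_prop)
    · rw [interior_Icc] at ht
      have h := ((hderiv t ht).const_mul r).sub
        (((hasDerivAt_pow 2 t).div_const 2).mul_const (f' r))
      exact (h.congr_deriv (by norm_num)).hasDerivWithinAt
    · rw [interior_Icc] at ht
      linarith [hchord t ht]
  have h := hmono (left_mem_Icc.2 hr.le) (right_mem_Icc.2 hr.le) hr.le
  refine le_of_mul_le_mul_left ?_ hr
  linarith

end DerivBounds

/-- Lemma 2.1, inequality (convex4): for a C² convex function `σ : [0,∞) → [0,∞)`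
with `σ 0 = 0` whose derivative is concave,
`0 ≤ σ(r₁+r₂) − σ r₁ − σ r₂ ≤ 2 (r₁ σ(r₂) + r₂ σ(r₁)) / (r₁+r₂)` for all `r₁, r₂ > 0`. -/
theorem convex4 (σ : ℝ → ℝ)
    (hσ_nonneg : ∀ r ∈ Set.Ici (0:ℝ), 0 ≤ σ r)
    (hσ_C2 : ContDiffOn ℝ 2 σ (Set.Ici 0))
    (hσ_convex : ConvexOn ℝ (Set.Ici 0) σ)
    (hσ_zero : σ 0 = 0)
    (hσ'_concave : ConcaveOn ℝ (Set.Ici 0) (deriv σ)) :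
    ∀ r₁ r₂ : ℝ, 0 < r₁ → 0 < r₂ →
      0 ≤ σ (r₁ + r₂) - σ r₁ - σ r₂ ∧
      σ (r₁ + r₂) - σ r₁ - σ r₂ ≤ 2 * (r₁ * σ r₂ + r₂ * σ r₁) / (r₁ + r₂) := by
  intro r₁ r₂ h₁ h₂
  have hcont : ContinuousOn σ (Ici 0) := hσ_C2.continuousOn
  have hderiv (x : ℝ) (hx : 0 < x) : HasDerivAt σ (deriv σ x) x :=
    ((hσ_C2.contDiffAt (Ici_mem_nhds hx)).differentiableAt (by norm_num)).hasDerivAt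
  have hderiv0 : 0 ≤ deriv σ 0 :=
    deriv_nonneg_of_isMinOn_Ici fun x hx => by simpa [hσ_zero] using hσ_nonneg x hx
  have hdefect (a b : ℝ) (ha : 0 < a) (hb : 0 < b) :
      σ (a + b) - σ a - σ b ≤ b * deriv σ a := by
    simpa [hσ_zero] using map_add_sub_sub_le_mul hcont hderiv
      (fun x y hx hy => hσ'_concave.map_add_le_add hderiv0 hx.le hy.le) ha hb.le
  have hmul (r : ℝ) (hr : 0 < r) : r * deriv σ r ≤ 2 * σ r := by
    simpa [hσ_zero] using mul_deriv_le_two_mul_sub hr (hcont.mono Icc_subset_Ici_self)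
      (fun t ht => hderiv t ht.1)
      (fun t ht => hσ'_concave.mul_le_mul_map hderiv0 ht.1.le ht.2.le)
  refine ⟨by linarith [hσ_convex.add_le_map_add hσ_zero.le h₁.le h₂.le], ?_⟩
  have h₁₂ := mul_le_mul_of_nonneg_left (hdefect r₁ r₂ h₁ h₂) h₁.le
  have h₂₁ := mul_le_mul_of_nonneg_left (hdefect r₂ r₁ h₂ h₁) h₂.le
  rw [add_comm r₂ r₁] at h₂₁
  rw [le_div_iff₀ (by positivity)]
  linarith [mul_le_mul_of_nonneg_left (hmul r₁ h₁) h₂.le,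
    mul_le_mul_of_nonneg_left (hmul r₂ h₂) h₁.le]
end

section
/- Let g_n satisfy the weak truncated formulation. Then for every t ≥ 0 one has ∫₀ⁿ y·g_n(y,t) dy ≤ ∫₀ⁿ y·g_n^in(y) dy, i.e. the first moment of the truncated non-conservative solution is bounded by the initial first moment. -/
/-!
Test the weak formulation with `ω y = y · χ_(0,n)(y)`. Fragmentation of a particle of size
`y + z < n` conserves `ω`, so the fragmentation term vanishes; a coagulation of `y, z ∈ (0,n)`
either conserves `ω` or, when `y + z ≥ n`, removes the mass `y + z` from `(0,n)`, so the
coagulation term is nonpositive. Hence the first moment can only decrease.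
-/

open MeasureTheory Set

/-- Indicator (characteristic) function of the interval `(a, b)`. -/
noncomputable def chi (a b : ℝ) : ℝ → ℝ := Set.indicator (Set.Ioo a b) 1

lemma chi_of_mem {a b y : ℝ} (h : y ∈ Ioo a b) : chi a b y = 1 :=
  indicator_of_mem h 1

lemma chi_nonneg (a b y : ℝ) : 0 ≤ chi a b y :=
  indicator_nonneg (fun _ _ => zero_le_one) y

lemma chi_le_one (a b y : ℝ) : chi a b y ≤ 1 := by
  unfold chi; by_cases h : y ∈ Ioo a b <;> simp [h]

lemma chi_mul_self (a b y : ℝ) : chi a b y * chi a b y = chi a b y := by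
  unfold chi; by_cases h : y ∈ Ioo a b <;> simp [h]

lemma measurable_chi (a b : ℝ) : Measurable (chi a b) :=
  measurable_one.indicator measurableSet_Ioo

noncomputable def truncId (b : ℝ) (y : ℝ) : ℝ := y * chi 0 b y

lemma measurable_truncId (b : ℝ) : Measurable (truncId b) :=
  measurable_id.mul (measurable_chi 0 b)

lemma abs_truncId_le {b : ℝ} (hb : 0 ≤ b) (y : ℝ) : |truncId b y| ≤ b := by
  by_cases h : y ∈ Ioo 0 b
  · rw [truncId, chi_of_mem h, mul_one, abs_of_pos h.1]
    exact h.2.le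
  · simpa [truncId, chi, indicator_of_notMem h] using hb

lemma truncId_add_sub_eq_zero {b y z : ℝ} (hy : 0 < y) (hz : 0 < z) (hyz : y + z < b) :
    truncId b (y + z) - truncId b y - truncId b z = 0 := by
  rw [truncId, truncId, truncId, chi_of_mem ⟨add_pos hy hz, hyz⟩,
    chi_of_mem ⟨hy, by linarith⟩, chi_of_mem ⟨hz, by linarith⟩]
  ring

lemma truncId_mul_chi_add_sub_nonpos {b y z : ℝ} (hy : y ∈ Ioo 0 b) (hz : z ∈ Ioo 0 b) :
    truncId b (y + z) * chi 0 b (y + z) - truncId b y - truncId b z ≤ 0 := by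
  rw [truncId, truncId, truncId, mul_assoc, chi_mul_self, chi_of_mem hy, chi_of_mem hz]
  nlinarith [chi_le_one 0 b (y + z), hy.1, hz.1]

lemma fragmentation_truncId_eq_zero (b t : ℝ) (F : ℝ → ℝ → ℝ) (g : ℝ → ℝ → ℝ) :
    (∫ s in Ioo 0 t, ∫ z in Ioo 0 b, ∫ y in Ioo 0 (b - z),
      (truncId b (y + z) - truncId b y - truncId b z) * F y z * g (y + z) s) = 0 :=
  setIntegral_eq_zero_of_forall_eq_zero fun s _ =>
    setIntegral_eq_zero_of_forall_eq_zero fun z hz =>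
      setIntegral_eq_zero_of_forall_eq_zero fun y hy => by
        rw [truncId_add_sub_eq_zero hy.1 hz.1 (by linarith [hy.2]), zero_mul, zero_mul]

lemma coagulation_truncId_nonpos (b t : ℝ) {K : ℝ → ℝ → ℝ} {g : ℝ → ℝ → ℝ}
    (hK : ∀ y z : ℝ, 0 < y → 0 < z → 0 ≤ K y z) (hg : ∀ y s, 0 ≤ g y s) :
    (∫ s in Ioo 0 t, ∫ y in Ioo 0 b, ∫ z in Ioo 0 b,
      (truncId b (y + z) * chi 0 b (y + z) - truncId b y - truncId b z)
        * K y z * g y s * g z s) ≤ 0 :=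
  setIntegral_nonpos measurableSet_Ioo fun s _ =>
    setIntegral_nonpos measurableSet_Ioo fun y hy =>
      setIntegral_nonpos measurableSet_Ioo fun z hz =>
        mul_nonpos_of_nonpos_of_nonneg
          (mul_nonpos_of_nonpos_of_nonneg
            (mul_nonpos_of_nonpos_of_nonneg (truncId_mul_chi_add_sub_nonpos hy hz)
              (hK y z hy.1 hz.1))
            (hg y s))
          (hg z s)

lemma MeasureTheory.IntegrableOn.mul_of_one_add_mul {f : ℝ → ℝ} {s : Set ℝ}
    (hs : MeasurableSet s) (hs0 : s ⊆ Ioi 0) (hf : IntegrableOn (fun y => (1 + y) * f y) s) :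
    IntegrableOn (fun y => y * f y) s := by
  have hbound : ∀ y ∈ s, ‖y / (1 + y)‖ ≤ 1 := fun y hy => by
    have hy : 0 < y := hs0 hy
    rw [Real.norm_of_nonneg (by positivity), div_le_one (by positivity)]
    linarith
  have hprod : IntegrableOn (fun y => y / (1 + y) * ((1 + y) * f y)) s :=
    hf.bdd_mul (measurable_id.div (measurable_const.add measurable_id)).aestronglyMeasurable
      ((ae_restrict_iff' hs).2 (Filter.Eventually.of_forall hbound))
  refine hprod.congr_fun (fun y hy => ?_) hs
  have hy0 : 0 < y := hs0 hy
  have : (1 : ℝ) + y ≠ 0 := by linarith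
  field_simp

lemma setIntegral_sub_mul_chi_mul_truncId {b : ℝ} {f h : ℝ → ℝ}
    (hf : IntegrableOn (fun y => y * f y) (Ioo 0 b))
    (hh : IntegrableOn (fun y => y * (h y * chi 0 b y)) (Ioo 0 b)) :
    (∫ y in Ioo 0 b, (f y - h y * chi 0 b y) * truncId b y)
      = (∫ y in Ioo 0 b, y * f y) - ∫ y in Ioo 0 b, y * (h y * chi 0 b y) := by
  rw [← integral_sub hf hh]
  refine setIntegral_congr_fun measurableSet_Ioo fun y hy => ?_
  simp only [truncId, chi_of_mem hy]
  ring

theorem moment_bound_general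
    (K F : ℝ → ℝ → ℝ)
    (hK_nonneg : ∀ y z : ℝ, 0 < y → 0 < z → 0 ≤ K y z)
    (gin : ℝ → ℝ) (hgin_nonneg : ∀ y, 0 ≤ gin y)
    (hgin_int : IntegrableOn (fun y => (1 + y) * gin y) (Set.Ioi 0))
    (n : ℕ)
    (g : ℝ → ℝ → ℝ) (hg_nonneg : ∀ y t, 0 ≤ g y t)
    (hweak : ∀ ω : ℝ → ℝ, Measurable ω → (∃ M : ℝ, ∀ y, |ω y| ≤ M) →
      ∀ t : ℝ, 0 ≤ t →
        (∫ y in Set.Ioo (0:ℝ) (n:ℝ), (g y t - gin y * chi 0 n y) * ω y)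
        = (1/2) * (∫ s in Set.Ioo (0:ℝ) t, ∫ y in Set.Ioo (0:ℝ) (n:ℝ),
              ∫ z in Set.Ioo (0:ℝ) (n:ℝ),
              (ω (y + z) * chi 0 n (y + z) - ω y - ω z) * K y z * g y s * g z s)
          - (1/2) * (∫ s in Set.Ioo (0:ℝ) t, ∫ z in Set.Ioo (0:ℝ) (n:ℝ),
              ∫ y in Set.Ioo (0:ℝ) ((n:ℝ) - z),
              (ω (y + z) - ω y - ω z) * F y z * g (y + z) s)) :
    ∀ t : ℝ, 0 ≤ t →
      (∫ y in Set.Ioo (0:ℝ) (n:ℝ), y * g y t)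
      ≤ ∫ y in Set.Ioo (0:ℝ) (n:ℝ), y * (gin y * chi 0 n y) := by
  intro t ht
  by_cases hint : IntegrableOn (fun y => y * g y t) (Ioo 0 n)
  · have hint_in : IntegrableOn (fun y => y * (gin y * chi 0 n y)) (Ioo 0 n) :=
      ((hgin_int.mono_set Ioo_subset_Ioi_self).mul_of_one_add_mul measurableSet_Ioo
        Ioo_subset_Ioi_self).congr_fun (fun y hy => by rw [chi_of_mem hy, mul_one])
        measurableSet_Ioo
    have hE := hweak (truncId n) (measurable_truncId n) ⟨n, abs_truncId_le n.cast_nonneg⟩ t ht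
    rw [setIntegral_sub_mul_chi_mul_truncId hint hint_in, fragmentation_truncId_eq_zero] at hE
    linarith [coagulation_truncId_nonpos (n : ℝ) t hK_nonneg hg_nonneg]
  · rw [integral_undef hint]
    exact setIntegral_nonneg measurableSet_Ioo fun y hy =>
      mul_nonneg hy.1.le (mul_nonneg (hgin_nonneg y) (chi_nonneg 0 n y))

/-- Inequality (tncfe2): the first moment of the truncated non-conservative
solution is bounded by the initial first moment. -/
theorem moment_bound
    (K F : ℝ → ℝ → ℝ) (k₁ k₂ : ℝ) (hk₁ : 0 < k₁) (hk₂ : 0 < k₂)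
    (hK_meas : Measurable (Function.uncurry K)) (hF_meas : Measurable (Function.uncurry F))
    (hK_nonneg : ∀ y z : ℝ, 0 < y → 0 < z → 0 ≤ K y z)
    (hF_nonneg : ∀ y z : ℝ, 0 < y → 0 < z → 0 ≤ F y z)
    (hK_symm : ∀ y z : ℝ, K y z = K z y) (hF_symm : ∀ y z : ℝ, F y z = F z y)
    (hK_bound : ∀ y z : ℝ, 0 < y → 0 < z → K y z ≤ k₁ * (1 + y + z))
    (hF_bound : ∀ y z : ℝ, 0 < y → 0 < z → F y z ≤ k₂ * (1 + y + z))
    (gin : ℝ → ℝ) (hgin_nonneg : ∀ y, 0 ≤ gin y)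
    (hgin_int : IntegrableOn (fun y => (1 + y) * gin y) (Set.Ioi 0))
    (n : ℕ) (hn : 1 ≤ n)
    (g : ℝ → ℝ → ℝ) (hg_nonneg : ∀ y t, 0 ≤ g y t)
    (hweak : ∀ ω : ℝ → ℝ, Measurable ω → (∃ M : ℝ, ∀ y, |ω y| ≤ M) →
      ∀ t : ℝ, 0 ≤ t →
        (∫ y in Set.Ioo (0:ℝ) (n:ℝ), (g y t - gin y * chi 0 n y) * ω y)
        = (1/2) * (∫ s in Set.Ioo (0:ℝ) t, ∫ y in Set.Ioo (0:ℝ) (n:ℝ),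
              ∫ z in Set.Ioo (0:ℝ) (n:ℝ),
              (ω (y + z) * chi 0 n (y + z) - ω y - ω z) * K y z * g y s * g z s)
          - (1/2) * (∫ s in Set.Ioo (0:ℝ) t, ∫ z in Set.Ioo (0:ℝ) (n:ℝ),
              ∫ y in Set.Ioo (0:ℝ) ((n:ℝ) - z),
              (ω (y + z) - ω y - ω z) * F y z * g (y + z) s)) :
    ∀ t : ℝ, 0 ≤ t →
      (∫ y in Set.Ioo (0:ℝ) (n:ℝ), y * g y t)
      ≤ ∫ y in Set.Ioo (0:ℝ) (n:ℝ), y * (gin y * chi 0 n y) :=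
  moment_bound_general K F hK_nonneg gin hgin_nonneg hgin_int n g hg_nonneg hweak
end

section
/- Let σ₁ : [0,∞) → [0,∞) be nondecreasing with lim_{r→∞} σ₁(r)/r = ∞, let K ≥ 0 be measurable, and for each n ≥ 1 let g_n : (0,n)×[0,T] → [0,∞) be measurable functions such that the tail bounds ∫₀ᵀ∫₀ⁿ∫_{n−y}ⁿ σ₁(y)·K(y,z)·g_n(y,s)·g_n(z,s) dz dy ds ≤ C and ∫₀ᵀ∫₀ⁿ∫_{n−y}ⁿ σ₁(z)·K(y,z)·g_n(y,s)·g_n(z,s) dz dy ds ≤ C hold with a constant C independent of n. Then lim_{n→∞} ∫₀ᵀ∫₀ⁿ∫_{n−y}ⁿ (y+z)·K(y,z)·g_n(y,s)·g_n(z,s) dz dy ds = 0. -/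
open MeasureTheory Filter

/-- Measurability of a parametric set-integral over a moving interval. -/
lemma lastmass_aux_meas {α : Type*} [MeasurableSpace α] (n : ℝ) (f : α → ℝ)
    (hf : Measurable f) (H : α × ℝ → ENNReal) (hH : Measurable H) :
    Measurable (fun x : α => ∫⁻ z in Set.Ioo (n - f x) n, H (x, z)) := by
  have hset : MeasurableSet {p : α × ℝ | n - f p.1 < p.2 ∧ p.2 < n} :=
    (measurableSet_lt ((measurable_const.sub (hf.comp measurable_fst))) measurable_snd).inter
      (measurableSet_lt measurable_snd measurable_const)
  have : (fun x : α => ∫⁻ z in Set.Ioo (n - f x) n, H (x, z))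
      = fun x => ∫⁻ z, ({p : α × ℝ | n - f p.1 < p.2 ∧ p.2 < n}.indicator H) (x, z) := by
    funext x
    rw [← lintegral_indicator measurableSet_Ioo]
    refine lintegral_congr fun z => ?_
    by_cases h : z ∈ Set.Ioo (n - f x) n
    · rw [Set.indicator_of_mem h, Set.indicator_of_mem]
      exact ⟨h.1, h.2⟩
    · rw [Set.indicator_of_notMem h, Set.indicator_of_notMem]
      intro hc
      exact h ⟨hc.1, hc.2⟩
  rw [this]
  exact Measurable.lintegral_prod_right' (hH.indicator hset)

/-- Vanishing of the mass defect term (lastmass): if the tail integrals weighted by a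
superlinear function `σ₁` are bounded uniformly in `n`, then the mass defect
`∫₀ᵀ∫₀ⁿ∫_{n−y}ⁿ (y+z) K(y,z) g_n(y,s) g_n(z,s) dz dy ds` tends to `0` as `n → ∞`. -/
theorem lastmass (T C : ℝ) (hT : 0 < T) (hC : 0 < C)
    (σ₁ : ℝ → ℝ)
    (hσ_nonneg : ∀ r ∈ Set.Ici (0:ℝ), 0 ≤ σ₁ r)
    (hσ_mono : MonotoneOn σ₁ (Set.Ici 0))
    (hσ_superlinear : Tendsto (fun r : ℝ => σ₁ r / r) atTop atTop)
    (K : ℝ → ℝ → ℝ) (hK_meas : Measurable (Function.uncurry K))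
    (hK_nonneg : ∀ y z : ℝ, 0 ≤ K y z)
    (g : ℕ → ℝ → ℝ → ℝ) (hg_meas : ∀ n, Measurable (Function.uncurry (g n)))
    (hg_nonneg : ∀ n y t, 0 ≤ g n y t)
    (htail₁ : ∀ n : ℕ, 1 ≤ n →
      (∫⁻ s in Set.Ioo (0:ℝ) T, ∫⁻ y in Set.Ioo (0:ℝ) (n:ℝ),
          ∫⁻ z in Set.Ioo ((n:ℝ) - y) (n:ℝ),
          ENNReal.ofReal (σ₁ y * K y z * g n y s * g n z s))
        ≤ ENNReal.ofReal C)
    (htail₂ : ∀ n : ℕ, 1 ≤ n →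
      (∫⁻ s in Set.Ioo (0:ℝ) T, ∫⁻ y in Set.Ioo (0:ℝ) (n:ℝ),
          ∫⁻ z in Set.Ioo ((n:ℝ) - y) (n:ℝ),
          ENNReal.ofReal (σ₁ z * K y z * g n y s * g n z s))
        ≤ ENNReal.ofReal C) :
    Tendsto (fun n : ℕ =>
        ∫⁻ s in Set.Ioo (0:ℝ) T, ∫⁻ y in Set.Ioo (0:ℝ) (n:ℝ),
          ∫⁻ z in Set.Ioo ((n:ℝ) - y) (n:ℝ),
          ENNReal.ofReal ((y + z) * K y z * g n y s * g n z s))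
      atTop (nhds 0) := by
  -- modified version of σ₁ that is globally monotone (hence measurable) and agrees on [0,∞)
  set σ' : ℝ → ℝ := fun r => σ₁ (max r 0) with hσ'def
  have hσ'_mono : Monotone σ' := fun a b hab =>
    hσ_mono (Set.mem_Ici.mpr (le_max_right a 0)) (Set.mem_Ici.mpr (le_max_right b 0))
      (max_le_max hab le_rfl)
  have hσ'_meas : Measurable σ' := hσ'_mono.measurable
  have hσ'_nonneg : ∀ r, 0 ≤ σ' r := fun r => hσ_nonneg _ (Set.mem_Ici.mpr (le_max_right r 0))
  have hσ'_eq : ∀ r : ℝ, 0 ≤ r → σ' r = σ₁ r := by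
    intro r hr
    simp only [hσ'def, max_eq_left hr]
  rw [ENNReal.tendsto_nhds_zero]
  intro ε hε
  obtain ⟨δ, hδ0, hδε⟩ : ∃ δ : ℝ, 0 < ENNReal.ofReal δ ∧ ENNReal.ofReal δ < ε := by
    obtain ⟨r, _, hr1, hr2⟩ := ENNReal.lt_iff_exists_real_btwn.mp hε
    exact ⟨r, hr1, hr2⟩
  have hδpos : 0 < δ := by
    by_contra h
    rw [ENNReal.ofReal_eq_zero.mpr (le_of_not_gt h)] at hδ0
    exact lt_irrefl _ hδ0
  set M : ℝ := 4 * C / δ with hMdef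
  have hM : 0 < M := by positivity
  obtain ⟨R, hR⟩ := eventually_atTop.mp (hσ_superlinear.eventually_ge_atTop M)
  filter_upwards [eventually_ge_atTop (max 1 ⌈2 * R⌉₊)] with n hn
  have h1n : 1 ≤ n := le_trans (le_max_left _ _) hn
  have hRn : 2 * R ≤ (n : ℝ) := by
    have : ⌈2 * R⌉₊ ≤ n := le_trans (le_max_right _ _) hn
    exact le_trans (Nat.le_ceil _) (Nat.cast_le.mpr this)
  set nr : ℝ := (n : ℝ) with hnr
  have hnrpos : 0 < nr := by
    have : (1:ℝ) ≤ (n:ℝ) := by exact_mod_cast h1n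
    linarith
  -- the pointwise key inequality
  have key : ∀ y ∈ Set.Ioo (0:ℝ) nr, ∀ z ∈ Set.Ioo (nr - y) nr,
      y + z ≤ 2 / M * (σ' y + σ' z) := by
    intro y hy z hz
    have hz0 : 0 < z := lt_of_le_of_lt (by linarith [hy.2]) hz.1
    have hyz : nr < y + z := by linarith [hz.1]
    set m : ℝ := max y z with hm
    have hm0 : 0 < m := lt_of_lt_of_le hy.1 (le_max_left _ _)
    have hmR : R ≤ m := by
      have h2m : y + z ≤ 2 * m := by
        have := le_max_left y z
        have := le_max_right y z
        linarith
      nlinarith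
    have hMm : M * m ≤ σ₁ m := by
      have h' := hR m hmR
      rw [le_div_iff₀ hm0] at h'
      linarith
    have hσm : σ₁ m ≤ σ' y + σ' z := by
      rcases le_total y z with h | h
      · have hmz : m = z := max_eq_right h
        rw [hmz, ← hσ'_eq z hz0.le]
        linarith [hσ'_nonneg y]
      · have hmy : m = y := max_eq_left h
        rw [hmy, ← hσ'_eq y hy.1.le]
        linarith [hσ'_nonneg z]
    have h2m : y + z ≤ 2 * m := by
      have := le_max_left y z
      have := le_max_right y z
      linarith
    calc y + z ≤ 2 * m := h2m
      _ = 2 / M * (M * m) := by field_simp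
      _ ≤ 2 / M * (σ₁ m) := by
          apply mul_le_mul_of_nonneg_left hMm
          positivity
      _ ≤ 2 / M * (σ' y + σ' z) := by
          apply mul_le_mul_of_nonneg_left hσm
          positivity
  -- abbreviations
  set c : ENNReal := ENNReal.ofReal (2 / M) with hcdef
  have hc_ne_top : c ≠ ⊤ := ENNReal.ofReal_ne_top
  have h2M : (0:ℝ) ≤ 2 / M := by positivity
  -- measurable integrands
  have hKm : Measurable fun p : (ℝ × ℝ) × ℝ => K p.1.2 p.2 :=
    hK_meas.comp ((measurable_snd.comp measurable_fst).prodMk measurable_snd)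
  have hgym : Measurable fun p : (ℝ × ℝ) × ℝ => g n p.1.2 p.1.1 :=
    (hg_meas n).comp ((measurable_snd.comp measurable_fst).prodMk
      (measurable_fst.comp measurable_fst))
  have hgzm : Measurable fun p : (ℝ × ℝ) × ℝ => g n p.2 p.1.1 :=
    (hg_meas n).comp (measurable_snd.prodMk (measurable_fst.comp measurable_fst))
  have hF1 : Measurable fun p : (ℝ × ℝ) × ℝ =>
      c * ENNReal.ofReal (σ' p.1.2 * K p.1.2 p.2 * g n p.1.2 p.1.1 * g n p.2 p.1.1) :=
    (ENNReal.measurable_ofReal.comp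
      ((((hσ'_meas.comp (measurable_snd.comp measurable_fst)).mul hKm).mul hgym).mul
        hgzm)).const_mul c
  have hF2 : Measurable fun p : (ℝ × ℝ) × ℝ =>
      c * ENNReal.ofReal (σ' p.2 * K p.1.2 p.2 * g n p.1.2 p.1.1 * g n p.2 p.1.1) :=
    (ENNReal.measurable_ofReal.comp
      ((((hσ'_meas.comp measurable_snd).mul hKm).mul hgym).mul hgzm)).const_mul c
  -- measurability of the inner integrals
  have hA2 : Measurable fun p : ℝ × ℝ => ∫⁻ z in Set.Ioo (nr - p.2) nr,
      c * ENNReal.ofReal (σ' p.2 * K p.2 z * g n p.2 p.1 * g n z p.1) :=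
    lastmass_aux_meas nr (fun p : ℝ × ℝ => p.2) measurable_snd _ hF1
  have hB2 : Measurable fun p : ℝ × ℝ => ∫⁻ z in Set.Ioo (nr - p.2) nr,
      c * ENNReal.ofReal (σ' z * K p.2 z * g n p.2 p.1 * g n z p.1) :=
    lastmass_aux_meas nr (fun p : ℝ × ℝ => p.2) measurable_snd _ hF2
  have hAs : Measurable fun s : ℝ => ∫⁻ y in Set.Ioo (0:ℝ) nr,
      ∫⁻ z in Set.Ioo (nr - y) nr, c * ENNReal.ofReal (σ' y * K y z * g n y s * g n z s) :=
    Measurable.lintegral_prod_right' (f := fun p : ℝ × ℝ => ∫⁻ z in Set.Ioo (nr - p.2) nr,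
      c * ENNReal.ofReal (σ' p.2 * K p.2 z * g n p.2 p.1 * g n z p.1)) hA2
  -- the main estimate
  have main : (∫⁻ s in Set.Ioo (0:ℝ) T, ∫⁻ y in Set.Ioo (0:ℝ) nr,
      ∫⁻ z in Set.Ioo (nr - y) nr, ENNReal.ofReal ((y + z) * K y z * g n y s * g n z s))
      ≤ (∫⁻ s in Set.Ioo (0:ℝ) T, ∫⁻ y in Set.Ioo (0:ℝ) nr,
          ∫⁻ z in Set.Ioo (nr - y) nr,
          c * ENNReal.ofReal (σ' y * K y z * g n y s * g n z s))
        + (∫⁻ s in Set.Ioo (0:ℝ) T, ∫⁻ y in Set.Ioo (0:ℝ) nr,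
          ∫⁻ z in Set.Ioo (nr - y) nr,
          c * ENNReal.ofReal (σ' z * K y z * g n y s * g n z s)) := by
    have split : (∫⁻ s in Set.Ioo (0:ℝ) T, ∫⁻ y in Set.Ioo (0:ℝ) nr,
        ((∫⁻ z in Set.Ioo (nr - y) nr,
            c * ENNReal.ofReal (σ' y * K y z * g n y s * g n z s))
          + ∫⁻ z in Set.Ioo (nr - y) nr,
            c * ENNReal.ofReal (σ' z * K y z * g n y s * g n z s)))
        = (∫⁻ s in Set.Ioo (0:ℝ) T, ∫⁻ y in Set.Ioo (0:ℝ) nr,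
            ∫⁻ z in Set.Ioo (nr - y) nr,
            c * ENNReal.ofReal (σ' y * K y z * g n y s * g n z s))
          + (∫⁻ s in Set.Ioo (0:ℝ) T, ∫⁻ y in Set.Ioo (0:ℝ) nr,
            ∫⁻ z in Set.Ioo (nr - y) nr,
            c * ENNReal.ofReal (σ' z * K y z * g n y s * g n z s)) := by
      rw [← lintegral_add_left hAs]
      refine lintegral_congr fun s => ?_
      exact lintegral_add_left (hA2.comp (measurable_prodMk_left)) _
    rw [← split]
    refine setLIntegral_mono' measurableSet_Ioo fun s _ => ?_
    refine setLIntegral_mono' measurableSet_Ioo fun y hy => ?_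
    calc (∫⁻ z in Set.Ioo (nr - y) nr, ENNReal.ofReal ((y + z) * K y z * g n y s * g n z s))
        ≤ ∫⁻ z in Set.Ioo (nr - y) nr,
            (c * ENNReal.ofReal (σ' y * K y z * g n y s * g n z s)
              + c * ENNReal.ofReal (σ' z * K y z * g n y s * g n z s)) := by
          refine setLIntegral_mono' measurableSet_Ioo fun z hz => ?_
          have hprod : (0:ℝ) ≤ K y z * g n y s * g n z s := by
            have := hK_nonneg y z
            have := hg_nonneg n y s
            have := hg_nonneg n z s
            positivity
          have h2 := mul_le_mul_of_nonneg_right (key y hy z hz) hprod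
          rw [hcdef, ← ENNReal.ofReal_mul h2M, ← ENNReal.ofReal_mul h2M,
            ← ENNReal.ofReal_add
              (mul_nonneg h2M (mul_nonneg (mul_nonneg (mul_nonneg (hσ'_nonneg y)
                (hK_nonneg y z)) (hg_nonneg n y s)) (hg_nonneg n z s)))
              (mul_nonneg h2M (mul_nonneg (mul_nonneg (mul_nonneg (hσ'_nonneg z)
                (hK_nonneg y z)) (hg_nonneg n y s)) (hg_nonneg n z s)))]
          apply ENNReal.ofReal_le_ofReal
          nlinarith [h2]
        _ = _ := lintegral_add_left
            ((ENNReal.measurable_ofReal.comp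
              ((((measurable_const.mul
                (hK_meas.comp (measurable_const.prodMk measurable_id))).mul
                  measurable_const).mul
                ((hg_meas n).comp (measurable_id.prodMk measurable_const))))).const_mul c) _
  -- bound each of the two integrals by the tail hypotheses
  have hb1 : (∫⁻ s in Set.Ioo (0:ℝ) T, ∫⁻ y in Set.Ioo (0:ℝ) nr,
      ∫⁻ z in Set.Ioo (nr - y) nr,
      c * ENNReal.ofReal (σ' y * K y z * g n y s * g n z s)) ≤ c * ENNReal.ofReal C := by
    simp_rw [lintegral_const_mul' c _ hc_ne_top]
    refine mul_le_mul_right (le_trans ?_ (htail₁ n h1n)) c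
    refine setLIntegral_mono' measurableSet_Ioo fun s _ => ?_
    refine setLIntegral_mono' measurableSet_Ioo fun y hy => ?_
    refine setLIntegral_mono' measurableSet_Ioo fun z _ => ?_
    rw [hσ'_eq y hy.1.le]
  have hb2 : (∫⁻ s in Set.Ioo (0:ℝ) T, ∫⁻ y in Set.Ioo (0:ℝ) nr,
      ∫⁻ z in Set.Ioo (nr - y) nr,
      c * ENNReal.ofReal (σ' z * K y z * g n y s * g n z s)) ≤ c * ENNReal.ofReal C := by
    simp_rw [lintegral_const_mul' c _ hc_ne_top]
    refine mul_le_mul_right (le_trans ?_ (htail₂ n h1n)) c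
    refine setLIntegral_mono' measurableSet_Ioo fun s _ => ?_
    refine setLIntegral_mono' measurableSet_Ioo fun y hy => ?_
    refine setLIntegral_mono' measurableSet_Ioo fun z hz => ?_
    have hz0 : (0:ℝ) ≤ z := by
      have : nr - y ≤ z := hz.1.le
      have : (0:ℝ) < nr - y := by linarith [hy.2]
      linarith [hz.1]
    rw [hσ'_eq z hz0]
  refine le_trans (le_trans main (add_le_add hb1 hb2)) ?_
  have : c * ENNReal.ofReal C + c * ENNReal.ofReal C = ENNReal.ofReal δ := by
    rw [hcdef, ← ENNReal.ofReal_mul h2M, ← ENNReal.ofReal_add (by positivity) (by positivity)]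
    congr 1
    rw [hMdef]
    field_simp
    ring
  rw [this]
  exact hδε.le
end
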